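/- arXiv:2503.00001 — 2 statements merged into one kernel-verified Lean document; each statement's English description precedes it below -/
import Mathlib

section
/- Let Q(z,w) = p_1(w)q_1(z) + p_2(w)q_2(z) be a bivariate polynomial over ℂ where {p_1, p_2} are linearly independent univariate polynomials in w and {q_1, q_2} are linearly independent univariate polynomials in z. Then for every d ≥ 1, the coefficient matrix of Q^d has rank exactly d + 1. -/
/-!
Binomially, `Q^d = ∑ᵢ C(d,i) (p₁ⁱ p₂^(d-i))(w) · (q₁ⁱ q₂^(d-i))(z)`, so every coefficient matrix
of `Q^d` factors as `A * B` through `ℂ^(d+1)` and has rank at most `d + 1`. The families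
`p₁ⁱ p₂^(d-i)` and `q₁ⁱ q₂^(d-i)` are linearly independent because `p₁ / p₂` is not a constant,
hence transcendental over the algebraically closed field `ℂ`. In a matrix large enough to hold
all coefficients of these polynomials, `A` has independent columns and `B` independent rows, so
its rank is `d + 1`; and that matrix is obtained from any matrix holding all coefficients of
`Q^d` by padding with zeros, which does not raise the rank.
-/

open Polynomial

/-- Coefficient matrix of a bivariate polynomial `P ∈ (ℂ[w])[z]`:
entry `(j, k)` is the coefficient of `z^j w^k`. -/
noncomputable def coeffMatrix (m n : ℕ) (P : Polynomial (Polynomial ℂ)) :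
    Matrix (Fin (m + 1)) (Fin (n + 1)) ℂ :=
  Matrix.of fun j k => (P.coeff (j : ℕ)).coeff (k : ℕ)

theorem Transcendental.linearIndependent_pow {k K : Type*} [Field k] [CommRing K] [Algebra k K]
    {f : K} (hf : Transcendental k f) : LinearIndependent k fun n : ℕ => f ^ n := by
  have := (basisMonomials k).linearIndependent.map' (Polynomial.aeval f).toLinearMap
    (LinearMap.ker_eq_bot.mpr (transcendental_iff_injective.mp hf))
  simpa [Function.comp_def] using this

theorem transcendental_div_of_linearIndependent {k A : Type*} [Field k] [IsAlgClosed k]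
    [CommRing A] [IsDomain A] [Algebra k A] {p q : A} (h : LinearIndependent k ![p, q]) :
    Transcendental k (algebraMap A (FractionRing A) p / algebraMap A (FractionRing A) q) := by
  have hq : algebraMap A (FractionRing A) q ≠ 0 := by
    rw [ne_eq, IsFractionRing.to_map_eq_zero_iff]
    exact h.ne_zero 1
  intro halg
  obtain ⟨c, hc⟩ := minpoly.mem_range_of_degree_eq_one k _
    (IsAlgClosed.degree_eq_one_of_irreducible k (minpoly.irreducible halg.isIntegral))
  refine one_ne_zero (LinearIndependent.pair_iff.mp h 1 (-c) ?_).1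
  apply IsFractionRing.injective A (FractionRing A)
  rw [eq_div_iff hq] at hc
  simp [Algebra.smul_def, ← hc, IsScalarTower.algebraMap_apply k A (FractionRing A)]

theorem linearIndependent_pow_mul_pow {k A : Type*} [Field k] [IsAlgClosed k]
    [CommRing A] [IsDomain A] [Algebra k A] {p q : A} (h : LinearIndependent k ![p, q])
    (d : ℕ) : LinearIndependent k fun i : Fin (d + 1) => p ^ (i : ℕ) * q ^ (d - i) := by
  set φ := algebraMap A (FractionRing A)
  have hq : φ q ≠ 0 := by
    rw [ne_eq, IsFractionRing.to_map_eq_zero_iff]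
    exact h.ne_zero 1
  have hpow : LinearIndependent k fun i : Fin (d + 1) => φ q ^ d * (φ p / φ q) ^ (i : ℕ) :=
    ((transcendental_div_of_linearIndependent h).linearIndependent_pow.comp _
      Fin.val_injective).map' (LinearMap.mulLeft k (φ q ^ d))
      (LinearMap.ker_eq_bot.mpr (mul_right_injective₀ (pow_ne_zero d hq)))
  let ψ := (IsScalarTower.toAlgHom k A (FractionRing A)).toLinearMap
  have hψ : ψ ∘ (fun i : Fin (d + 1) => p ^ (i : ℕ) * q ^ (d - i)) =
      fun i : Fin (d + 1) => φ q ^ d * (φ p / φ q) ^ (i : ℕ) := by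
    ext i
    simp only [ψ, Function.comp_apply, AlgHom.toLinearMap_apply, IsScalarTower.coe_toAlgHom',
      map_mul, map_pow, div_pow]
    rw [pow_sub₀ _ hq (Fin.is_le i)]
    field_simp
    rfl
  exact LinearIndependent.of_comp ψ (hψ ▸ hpow)

theorem Polynomial.linearIndependent_coeff_fin {R ι : Type*} [CommRing R] {s : ι → R[X]}
    (hs : LinearIndependent R s) {m : ℕ} (hdeg : ∀ i, (s i).natDegree ≤ m) :
    LinearIndependent R fun i j => (s i).coeff (j : Fin (m + 1)) := by
  have hmem : ∀ i, s i ∈ degreeLT R (m + 1) := fun i =>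
    mem_degreeLT.mpr ((degree_le_natDegree.trans (WithBot.coe_le_coe.mpr (hdeg i))).trans_lt
      (WithBot.coe_lt_coe.mpr m.lt_succ_self))
  have hs' : LinearIndependent R fun i => (⟨s i, hmem i⟩ : degreeLT R (m + 1)) :=
    LinearIndependent.of_comp (degreeLT R (m + 1)).subtype hs
  exact hs'.map' (degreeLTEquiv R (m + 1)).toLinearMap (degreeLTEquiv R (m + 1)).ker

theorem Matrix.rank_mul_eq_card_of_linearIndependent {K l m n : Type*} [Field K] [Fintype l]
    [Fintype m] [Fintype n] {A : Matrix l m K} {B : Matrix m n K}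
    (hA : LinearIndependent K A.col) (hB : LinearIndependent K B.row) :
    (A * B).rank = Fintype.card m := by
  have hBsurj : LinearMap.range B.mulVecLin = ⊤ := by
    apply Submodule.eq_top_of_finrank_eq
    rw [← Matrix.rank, hB.rank_matrix, Module.finrank_pi]
  rw [Matrix.rank, Matrix.mulVecLin_mul, LinearMap.range_comp_of_range_eq_top _ hBsurj,
    ← Matrix.rank, ← Matrix.rank_transpose]
  exact LinearIndependent.rank_matrix (M := A.transpose) hA

theorem Fin.sum_ite_val_eq_of_forall_lt {M : Type*} [AddCommMonoid M] {f : ℕ → M} {m : ℕ}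
    (hf : ∀ a, m < a → f a = 0) (i : ℕ) :
    ∑ a : Fin (m + 1), (if i = (a : ℕ) then f a else 0) = f i := by
  rw [Fin.sum_univ_eq_sum_range (fun a => if i = a then f a else 0), Finset.sum_ite_eq]
  split_ifs with h
  · rfl
  · exact (hf i (by simpa using h)).symm

theorem coeffMatrix_sum_C_mul_map_C {ι : Type*} [Fintype ι] (r s : ι → ℂ[X]) (m n : ℕ) :
    coeffMatrix m n (∑ i, C (s i) * (r i).map C) =
      (Matrix.of fun (j : Fin (m + 1)) i => (r i).coeff j) *
        Matrix.of fun i (k : Fin (n + 1)) => (s i).coeff k := by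
  ext j k
  simp [coeffMatrix, Matrix.mul_apply, mul_comm]

theorem rank_coeffMatrix_le {P : ℂ[X][X]} {m n : ℕ} (hm : P.natDegree ≤ m)
    (hn : ∀ j, (P.coeff j).natDegree ≤ n) (m' n' : ℕ) :
    (coeffMatrix m' n' P).rank ≤ (coeffMatrix m n P).rank := by
  let E : Matrix (Fin (m' + 1)) (Fin (m + 1)) ℂ := .of fun i a => if (i : ℕ) = a then 1 else 0
  let F : Matrix (Fin (n + 1)) (Fin (n' + 1)) ℂ := .of fun b k => if (k : ℕ) = b then 1 else 0
  have hpad : coeffMatrix m' n' P = E * coeffMatrix m n P * F := by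
    ext i k
    simp only [coeffMatrix, E, F, Matrix.mul_apply, Matrix.of_apply, mul_ite, ite_mul, one_mul,
      mul_one, zero_mul, mul_zero]
    have hrows : ∀ b : ℕ, ∑ a : Fin (m + 1), (if (i : ℕ) = a then (P.coeff a).coeff b else 0) =
        (P.coeff i).coeff b := fun b =>
      Fin.sum_ite_val_eq_of_forall_lt (f := fun a => (P.coeff a).coeff b)
        (fun a ha => by rw [coeff_eq_zero_of_natDegree_lt (hm.trans_lt ha), coeff_zero]) i
    simp_rw [hrows]
    exact (Fin.sum_ite_val_eq_of_forall_lt (f := (P.coeff i).coeff)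
      (fun b hb => coeff_eq_zero_of_natDegree_lt ((hn i).trans_lt hb)) k).symm
  rw [hpad]
  exact (Matrix.rank_mul_le_left _ _).trans (Matrix.rank_mul_le_right _ _)

theorem rank_coeffMatrix_sum_C_mul_map_C {ι : Type*} [Fintype ι] {r s : ι → ℂ[X]}
    (hr : LinearIndependent ℂ r) (hs : LinearIndependent ℂ s) {m n : ℕ}
    (hm : (∑ i, C (s i) * (r i).map C).natDegree ≤ m)
    (hn : ∀ j, ((∑ i, C (s i) * (r i).map C).coeff j).natDegree ≤ n) :
    (coeffMatrix m n (∑ i, C (s i) * (r i).map C)).rank = Fintype.card ι := by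
  refine le_antisymm ?_ ?_
  · rw [coeffMatrix_sum_C_mul_map_C]
    exact (Matrix.rank_mul_le_left _ _).trans (Matrix.rank_le_card_width _)
  · obtain ⟨M, hM⟩ := Finite.exists_le fun i => (r i).natDegree
    obtain ⟨N, hN⟩ := Finite.exists_le fun i => (s i).natDegree
    calc Fintype.card ι = (coeffMatrix M N (∑ i, C (s i) * (r i).map C)).rank := by
          rw [coeffMatrix_sum_C_mul_map_C]
          exact (Matrix.rank_mul_eq_card_of_linearIndependent
            (linearIndependent_coeff_fin hr hM) (linearIndependent_coeff_fin hs hN)).symm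
      _ ≤ _ := rank_coeffMatrix_le hm hn M N

theorem add_pow_eq_sum_C_mul_map_C {R : Type*} [CommSemiring R] (p₁ p₂ q₁ q₂ : R[X]) (d : ℕ) :
    (C p₁ * q₁.map C + C p₂ * q₂.map C) ^ d =
      ∑ i : Fin (d + 1), C ((d.choose i : R) • (p₁ ^ (i : ℕ) * p₂ ^ (d - i))) *
        (q₁ ^ (i : ℕ) * q₂ ^ (d - i)).map C := by
  rw [add_pow, ← Fin.sum_univ_eq_sum_range]
  refine Finset.sum_congr rfl fun i _ => ?_
  simp only [Polynomial.map_mul, Polynomial.map_pow, smul_eq_C_mul, map_mul, map_pow, map_natCast]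
  ring

theorem stmt_5_general (p₁ p₂ q₁ q₂ : Polynomial ℂ)
    (hp : LinearIndependent ℂ ![p₁, p₂]) (hq : LinearIndependent ℂ ![q₁, q₂])
    (Q : Polynomial (Polynomial ℂ))
    (hQ : Q = Polynomial.C p₁ * q₁.map Polynomial.C + Polynomial.C p₂ * q₂.map Polynomial.C)
    (d m n : ℕ)
    (hm : (Q ^ d).natDegree ≤ m)
    (hn : ∀ j, ((Q ^ d).coeff j).natDegree ≤ n) :
    (coeffMatrix m n (Q ^ d)).rank = d + 1 := by
  have hs : LinearIndependent ℂ fun i : Fin (d + 1) =>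
      (d.choose i : ℂ) • (p₁ ^ (i : ℕ) * p₂ ^ (d - i)) :=
    (linearIndependent_pow_mul_pow hp d).units_smul fun i =>
      Units.mk0 _ (Nat.cast_ne_zero.mpr (Nat.choose_pos (Fin.is_le i)).ne')
  subst hQ
  rw [add_pow_eq_sum_C_mul_map_C] at hm hn ⊢
  rw [rank_coeffMatrix_sum_C_mul_map_C (linearIndependent_pow_mul_pow hq d) hs hm hn,
    Fintype.card_fin]

/-- If `Q(z,w) = p₁(w) q₁(z) + p₂(w) q₂(z)` with `{p₁, p₂}` and `{q₁, q₂}` each linearly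
independent over `ℂ`, then for every `d ≥ 1` the coefficient matrix of `Q^d` (of any size
large enough to hold all the coefficients of `Q^d`) has rank exactly `d + 1`. -/
theorem stmt_5 (p₁ p₂ q₁ q₂ : Polynomial ℂ)
    (hp : LinearIndependent ℂ ![p₁, p₂]) (hq : LinearIndependent ℂ ![q₁, q₂])
    (Q : Polynomial (Polynomial ℂ))
    (hQ : Q = Polynomial.C p₁ * q₁.map Polynomial.C + Polynomial.C p₂ * q₂.map Polynomial.C)
    (d m n : ℕ) (hd : 1 ≤ d)
    (hm : (Q ^ d).natDegree ≤ m)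
    (hn : ∀ j, ((Q ^ d).coeff j).natDegree ≤ n) :
    (coeffMatrix m n (Q ^ d)).rank = d + 1 :=
  stmt_5_general p₁ p₂ q₁ q₂ hp hq Q hQ d m n hm hn
end

section
/- Let P(z,w) be a bivariate polynomial over ℂ such that P(z̄, w̄) = 0 whenever P(z,w) = 0 and conversely (i.e., the zero set is invariant under coordinatewise conjugation), and assume P has no repeated factors. Then there is a nonzero constant λ ∈ ℂ such that λ·P has all real coefficients. -/
/-!
By the Nullstellensatz, a squarefree polynomial divides every polynomial vanishing on its zero
set. The coefficientwise conjugate `P̄` is again squarefree, and the hypothesis says it has the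
same zero set as `P`, so `P` and `P̄` divide each other and `P̄ = c • P` for a constant `c`.
If `a` is a nonzero coefficient of `P`, then `λ = ā` works: for every coefficient `b`,
`conj (ā b) = a b̄ = a c b = ā b`.
-/

open Polynomial Polynomial.Bivariate

theorem Squarefree.map_mulEquiv {M N : Type*} [Monoid M] [Monoid N] (f : M ≃* N) {x : M}
    (hx : Squarefree x) : Squarefree (f x) := by
  intro y hy
  have hdvd : f.symm y * f.symm y ∣ x := by simpa using map_dvd f.symm hy
  simpa using (hx _ hdvd).map f

theorem star_mul_of_star_eq_mul {R : Type*} [CommMonoid R] [StarMul R] {a b c : R}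
    (ha : star a = a * c) (hb : star b = b * c) : star (star a * b) = star a * b := by
  rw [star_mul, star_star, hb, ha]
  ac_rfl

namespace MvPolynomial

variable {k K σ : Type*} [Field k] [Field K] [Algebra k K] [IsAlgClosed K] [Finite σ]

theorem dvd_of_squarefree_of_forall_aeval_eq_zero {A B : MvPolynomial σ k} (hA : Squarefree A)
    (h : ∀ x : σ → K, aeval x A = 0 → aeval x B = 0) : A ∣ B := by
  have hB : B ∈ vanishingIdeal k (zeroLocus K (Ideal.span {A})) := fun x hx =>
    h x (hx A (Ideal.subset_span rfl))
  rwa [vanishingIdeal_zeroLocus_eq_radical,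
    (isRadical_iff_span_singleton.mp hA.isRadical).radical, Ideal.mem_span_singleton] at hB

end MvPolynomial

namespace Polynomial

theorem evalEval_map_mapRingHom {R S : Type*} [CommSemiring R] [CommSemiring S] (f : R →+* S)
    (x y : R) (p : R[X][Y]) : (p.map (mapRingHom f)).evalEval (f x) (f y) = f (p.evalEval x y) := by
  have hC : C (f y) = mapRingHom f (C y) := by simp
  rw [evalEval, hC, eval_map_apply, coe_mapRingHom, eval_map_apply]

namespace Bivariate

theorem eval_equivMvPolynomial {R : Type*} [CommSemiring R] (x y : R) (p : R[X][Y]) :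
    MvPolynomial.eval ![x, y] (equivMvPolynomial R p) = p.evalEval x y := by
  have : (MvPolynomial.eval ![x, y]).comp
      (equivMvPolynomial R : R[X][Y] →+* MvPolynomial (Fin 2) R) = evalEvalRingHom x y := by
    refine ringHom_ext' (ringHom_ext (fun a => ?_) ?_) ?_ <;> simp
  exact RingHom.congr_fun this p

theorem dvd_of_squarefree_of_forall_evalEval_eq_zero {k : Type*} [Field k] [IsAlgClosed k]
    {A B : k[X][Y]} (hA : Squarefree A) (h : ∀ x y, A.evalEval x y = 0 → B.evalEval x y = 0) :
    A ∣ B := by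
  let e := equivMvPolynomial k
  rw [← map_dvd_iff e]
  refine MvPolynomial.dvd_of_squarefree_of_forall_aeval_eq_zero (K := k)
    (hA.map_mulEquiv e.toMulEquiv) fun v hv => ?_
  have hv' : v = ![v 0, v 1] := by ext i; fin_cases i <;> rfl
  have hB := h (v 0) (v 1) (by rw [← eval_equivMvPolynomial, ← hv']; exact hv)
  rwa [← eval_equivMvPolynomial, ← hv'] at hB

theorem exists_coeff_coeff_eq_mul_of_associated {R : Type*} [CommRing R] [IsDomain R]
    {p q : R[X][Y]} (h : Associated p q) :
    ∃ c : R, ∀ j k, (q.coeff j).coeff k = (p.coeff j).coeff k * c := by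
  obtain ⟨u, rfl⟩ := h
  obtain ⟨r, hr, hrC⟩ := isUnit_iff.mp u.isUnit
  obtain ⟨c, -, rfl⟩ := isUnit_iff.mp hr
  exact ⟨c, fun j k => by rw [← hrC, coeff_mul_C, coeff_mul_C]⟩

end Bivariate

end Polynomial

/-- If the zero set in `ℂ²` of a bivariate polynomial `P ∈ (ℂ[w])[z]` without repeated
factors is invariant under coordinatewise complex conjugation, then some nonzero scalar
multiple `λ·P` has all real coefficients. -/
theorem stmt_14 (P : Polynomial (Polynomial ℂ)) (hsf : Squarefree P)
    (hzero : ∀ z w : ℂ,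
      (P.eval (Polynomial.C z)).eval w = 0 ↔
        (P.eval (Polynomial.C (starRingEnd ℂ z))).eval (starRingEnd ℂ w) = 0) :
    ∃ l : ℂ, l ≠ 0 ∧ ∀ j k : ℕ, (((l • P).coeff j).coeff k).im = 0 := by
  set Q := P.map (mapRingHom (starRingEnd ℂ))
  have hQsf : Squarefree Q := hsf.map_mulEquiv (mapEquiv (mapEquiv starRingAut)).toMulEquiv
  have hQcoeff : ∀ j k, (Q.coeff j).coeff k = starRingEnd ℂ ((P.coeff j).coeff k) := by
    intro j k
    rw [coeff_map, coe_mapRingHom, coeff_map]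
  have hQzero : ∀ x y, Q.evalEval x y = 0 ↔ P.evalEval x y = 0 := by
    intro x y
    have h := evalEval_map_mapRingHom (starRingEnd ℂ) (starRingEnd ℂ x) (starRingEnd ℂ y) P
    rw [Complex.conj_conj, Complex.conj_conj] at h
    rw [h, map_eq_zero]
    exact (hzero y x).symm
  have hassoc : Associated P Q := associated_of_dvd_dvd
    (dvd_of_squarefree_of_forall_evalEval_eq_zero hsf fun x y => (hQzero x y).mpr)
    (dvd_of_squarefree_of_forall_evalEval_eq_zero hQsf fun x y => (hQzero x y).mp)
  obtain ⟨c, hc⟩ := exists_coeff_coeff_eq_mul_of_associated hassoc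
  obtain ⟨j₀, k₀, h₀⟩ : ∃ j k, (P.coeff j).coeff k ≠ 0 := by
    by_contra! h
    exact hsf.ne_zero (ext fun j => ext fun k => h j k)
  refine ⟨starRingEnd ℂ ((P.coeff j₀).coeff k₀), (_root_.map_ne_zero _).mpr h₀, fun j k => ?_⟩
  rw [coeff_smul, coeff_smul, smul_eq_mul, ← Complex.conj_eq_iff_im]
  exact star_mul_of_star_eq_mul ((hQcoeff j₀ k₀).symm.trans (hc j₀ k₀))
    ((hQcoeff j k).symm.trans (hc j k))
end
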